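/- arXiv:1902.11087 — 3 statements merged into one kernel-verified Lean document; each statement's English description precedes it below -/
import Mathlib

section
/- Let T be selfadjoint on a Hilbert space H, (H_n) an increasing sequence of finite-dimensional subspaces of dom(T) whose orthogonal projections P_n converge strongly to the identity, and T_n = P_n T|_{H_n}. If for some u ∈ H one has (P_n T − T_n P_n)(T − i)^{-1} u → 0, then (T_n − i)^{-1} P_n u → (T − i)^{-1} u. -/
open scoped InnerProductSpace
open Filter Topology

/-- Let `T` be selfadjoint on a Hilbert space `H`, `(Hn)` an increasing
sequence of finite-dimensional subspaces of `dom T` whose orthogonal projections `Pn`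
converge strongly to the identity, and `Tn = Pn T|_{Hn}` the compressions.  Here `R`
denotes the resolvent `(T - i)⁻¹` of `T` and `Rn n` the resolvent `(Tn - i)⁻¹` of the
compression on `Hn n` (which exists with `‖(Tn - i)⁻¹‖ ≤ 1` since `Tn` is selfadjoint).
If for some `u ∈ H` one has `(Pn T − Tn Pn)(T − i)⁻¹ u → 0`, then
`(Tn − i)⁻¹ Pn u → (T − i)⁻¹ u`. -/
theorem galerkin_resolvent_convergence_of_commutator
    {H : Type*} [NormedAddCommGroup H] [InnerProductSpace ℂ H] [CompleteSpace H]
    (T : H →ₗ.[ℂ] H) (hT : IsSelfAdjoint T)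
    (Hn : ℕ → Submodule ℂ H) (hfin : ∀ n, FiniteDimensional ℂ (Hn n))
    (hmono : Monotone Hn) (hsub : ∀ n, Hn n ≤ T.domain)
    -- the orthogonal projections `Pn` onto `Hn`
    (Pn : ℕ → H → H)
    (hPmem : ∀ n u, Pn n u ∈ Hn n)
    (hPfix : ∀ n, ∀ u ∈ Hn n, Pn n u = u)
    (hPsym : ∀ n u v, ⟪Pn n u, v⟫_ℂ = ⟪u, Pn n v⟫_ℂ)
    (hPstrong : ∀ u : H, Tendsto (fun n => Pn n u) atTop (𝓝 u))
    -- `R = (T - i)⁻¹`: the resolvent of `T` at `i`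
    (R : H → H) (hRdom : ∀ u, R u ∈ T.domain)
    (hRinv : ∀ u, T ⟨R u, hRdom u⟩ - Complex.I • R u = u)
    (hRleft : ∀ x : T.domain, R (T x - Complex.I • (x : H)) = (x : H))
    -- `Rn n = (Tn - i)⁻¹`: the resolvent of the compression `Tn = Pn T|_{Hn}` on `Hn n`
    (Rn : ℕ → H → H) (hRnmem : ∀ n u, Rn n u ∈ Hn n)
    (hRninv : ∀ n, ∀ u ∈ Hn n,
      Pn n (T ⟨Rn n u, hsub n (hRnmem n u)⟩) - Complex.I • Rn n u = u)
    (hRnleft : ∀ n, ∀ x, ∀ hx : x ∈ Hn n,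
      Rn n (Pn n (T ⟨x, hsub n hx⟩) - Complex.I • x) = x)
    (hRnnorm : ∀ n u, ‖Rn n u‖ ≤ ‖u‖)
    -- the commutator condition (ii) for a fixed `u`
    (u : H)
    (hcomm : Tendsto
      (fun n => Pn n (T ⟨R u, hRdom u⟩)
        - Pn n (T ⟨Pn n (R u), hsub n (hPmem n (R u))⟩))
      atTop (𝓝 0)) :
    Tendsto (fun n => Rn n (Pn n u)) atTop (𝓝 (R u)) := by
  -- inner product of Pn u with elements of Hn
  have hPip : ∀ n a v, v ∈ Hn n → ⟪Pn n a, v⟫_ℂ = ⟪a, v⟫_ℂ := by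
    intro n a v hv
    rw [hPsym, hPfix n v hv]
  -- uniqueness
  have huniq : ∀ n (p q : H), p ∈ Hn n → q ∈ Hn n →
      (∀ v ∈ Hn n, ⟪p, v⟫_ℂ = ⟪q, v⟫_ℂ) → p = q := by
    intro n p q hp hq hpq
    have h := hpq (p - q) (Submodule.sub_mem _ hp hq)
    have : ⟪p - q, p - q⟫_ℂ = 0 := by
      rw [inner_sub_left, h, sub_self]
    exact sub_eq_zero.mp (inner_self_eq_zero.mp this)
  have hPsub : ∀ n a b, Pn n (a - b) = Pn n a - Pn n b := by
    intro n a b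
    refine huniq n _ _ (hPmem n _) (Submodule.sub_mem _ (hPmem n a) (hPmem n b)) ?_
    intro v hv
    rw [hPip n _ v hv, inner_sub_left, inner_sub_left, hPip n a v hv, hPip n b v hv]
  have hPsmul : ∀ n (c : ℂ) a, Pn n (c • a) = c • Pn n a := by
    intro n c a
    refine huniq n _ _ (hPmem n _) (Submodule.smul_mem _ c (hPmem n a)) ?_
    intro v hv
    rw [hPip n _ v hv, inner_smul_left, inner_smul_left, hPip n a v hv]
  set x := R u with hx
  -- the commutator term
  set c : ℕ → H := fun n => Pn n (T ⟨x, hRdom u⟩)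
      - Pn n (T ⟨Pn n x, hsub n (hPmem n x)⟩) with hc
  have key : ∀ n, Rn n (Pn n u) = Pn n x + Rn n (c n) := by
    intro n
    set w : H := Rn n (Pn n u) with hw
    have hwmem : w ∈ Hn n := hRnmem n _
    have hzmem : w - Pn n x ∈ Hn n := Submodule.sub_mem _ hwmem (hPmem n x)
    -- T on the difference
    have hTsub : T ⟨w - Pn n x, hsub n hzmem⟩
        = T ⟨w, hsub n hwmem⟩ - T ⟨Pn n x, hsub n (hPmem n x)⟩ := by
      have : (⟨w - Pn n x, hsub n hzmem⟩ : T.domain)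
          = ⟨w, hsub n hwmem⟩ - ⟨Pn n x, hsub n (hPmem n x)⟩ := rfl
      rw [this, T.map_sub]
    have hA : Pn n (T ⟨w, hsub n hwmem⟩) - Complex.I • w = Pn n u :=
      hRninv n (Pn n u) (hPmem n _)
    have hB : Pn n u = Pn n (T ⟨x, hRdom u⟩) - Complex.I • Pn n x := by
      conv_lhs => rw [← hRinv u]
      rw [hPsub, hPsmul]
    have hmain : Pn n (T ⟨w - Pn n x, hsub n hzmem⟩) - Complex.I • (w - Pn n x)
        = c n := by
      rw [hTsub, hPsub]
      have := hA
      rw [hB] at hA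
      have hPTw : Pn n (T ⟨w, hsub n hwmem⟩)
          = Pn n (T ⟨x, hRdom u⟩) - Complex.I • Pn n x + Complex.I • w := by
        rw [← hA]; abel
      rw [hPTw, hc]
      simp only [smul_sub]
      abel
    have := hRnleft n (w - Pn n x) hzmem
    rw [hmain] at this
    rw [this]; abel
  have hczero : Tendsto (fun n => Rn n (c n)) atTop (𝓝 0) := by
    have hcn : Tendsto (fun n => ‖c n‖) atTop (𝓝 0) := by
      simpa using hcomm.norm
    have : Tendsto (fun n => ‖Rn n (c n)‖) atTop (𝓝 0) :=
      squeeze_zero (fun n => norm_nonneg _) (fun n => hRnnorm n (c n)) hcn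
    exact tendsto_zero_iff_norm_tendsto_zero.mpr this
  have : Tendsto (fun n => Pn n x + Rn n (c n)) atTop (𝓝 (x + 0)) :=
    (hPstrong x).add hczero
  rw [add_zero] at this
  exact this.congr (fun n => (key n).symm)
end

section
/- Let T be selfadjoint on a separable Hilbert space H and (H_n) an increasing sequence of finite-dimensional subspaces of dom(T) with P_n → I strongly such that ⋃_n H_n is a core of T. Then the compressions T_n = P_n T|_{H_n} converge to T in strong resolvent sense, i.e. (T_n − i)^{-1} P_n u → (T − i)^{-1} u for every u ∈ H. -/
open scoped InnerProductSpace
open Filter Topology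

/-!
Write `x = (T - i)⁻¹ u`. Since `Tₙ - i` is invertible on `Hₙ` with inverse of norm at most one,
the Galerkin solution `(Tₙ - i)⁻¹ Pₙ u` is quasi-optimal in the graph norm: for every `y ∈ Hₙ`,
`‖(Tₙ - i)⁻¹ Pₙ u - x‖ ≤ ‖T x - T y‖ + 2 ‖x - y‖`. Because `⋃ Hₙ` is a core and the `Hₙ` increase,
the right-hand side is eventually as small as we like.
-/

section InnerSymmetric

variable {𝕜 E : Type*} [RCLike 𝕜] [NormedAddCommGroup E] [InnerProductSpace 𝕜 E] {P : E → E}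

theorem isLinearMap_of_inner_map_eq (hP : ∀ u v, ⟪P u, v⟫_𝕜 = ⟪u, P v⟫_𝕜) :
    IsLinearMap 𝕜 P where
  map_add a b := ext_inner_right 𝕜 fun v => by
    rw [hP, inner_add_left, inner_add_left, hP, hP]
  map_smul c a := ext_inner_right 𝕜 fun v => by
    rw [hP, inner_smul_left, inner_smul_left, hP]

theorem norm_map_le_of_inner_map_eq_of_idempotent (hP : ∀ u v, ⟪P u, v⟫_𝕜 = ⟪u, P v⟫_𝕜)
    (hidem : ∀ u, P (P u) = P u) (u : E) : ‖P u‖ ≤ ‖u‖ := by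
  have hsq : ‖P u‖ ^ 2 ≤ ‖u‖ * ‖P u‖ := by
    calc ‖P u‖ ^ 2 = RCLike.re ⟪P u, P u⟫_𝕜 := (inner_self_eq_norm_sq _).symm
      _ = RCLike.re ⟪u, P u⟫_𝕜 := by rw [hP, hidem]
      _ ≤ ‖u‖ * ‖P u‖ := re_inner_le_norm _ _
  nlinarith [norm_nonneg u, norm_nonneg (P u)]

end InnerSymmetric

section Galerkin

variable {𝕜 E : Type*} [RCLike 𝕜] [NormedAddCommGroup E] [InnerProductSpace 𝕜 E]
  {T : E →ₗ.[𝕜] E} {K : Submodule 𝕜 E} (hK : K ≤ T.domain) {P : E → E} {z : 𝕜} {Rk : E → E}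

theorem norm_galerkin_resolvent_sub_le (hPsym : ∀ u v, ⟪P u, v⟫_𝕜 = ⟪u, P v⟫_𝕜)
    (hPmem : ∀ u, P u ∈ K) (hPfix : ∀ u ∈ K, P u = u) (hRkmem : ∀ u, Rk u ∈ K)
    (hRkinv : ∀ u ∈ K, P (T ⟨Rk u, hK (hRkmem u)⟩) - z • Rk u = u)
    (hRkleft : ∀ x, ∀ hx : x ∈ K, Rk (P (T ⟨x, hK hx⟩) - z • x) = x)
    (hRknorm : ∀ u, ‖Rk u‖ ≤ ‖u‖) (x : T.domain) {y : E} (hy : y ∈ K) :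
    ‖Rk (P (T x - z • (x : E))) - x‖ ≤ ‖T x - T ⟨y, hK hy⟩‖ + (1 + ‖z‖) * ‖(x : E) - y‖ := by
  have hPlin := isLinearMap_of_inner_map_eq hPsym
  have hPnorm := norm_map_le_of_inner_map_eq_of_idempotent hPsym fun u => hPfix _ (hPmem u)
  set xk := Rk (P (T x - z • (x : E)))
  have hw : xk - y ∈ K := sub_mem (hRkmem _) hy
  have hTw : T ⟨xk - y, hK hw⟩ = T ⟨xk, hK (hRkmem _)⟩ - T ⟨y, hK hy⟩ :=
    T.map_sub ⟨xk, hK (hRkmem _)⟩ ⟨y, hK hy⟩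
  -- the Galerkin equation for `xk` turns the residual of `xk - y` into that of `x - y`
  have hresidual : P (T ⟨xk - y, hK hw⟩) - z • (xk - y)
      = P (T x - T ⟨y, hK hy⟩) - z • P ((x : E) - y) := by
    have hxk : P (T ⟨xk, _⟩) - z • xk = _ := hRkinv _ (hPmem _)
    have hPu : P (T x - z • (x : E)) = P (T x) - z • P x := by
      rw [hPlin.map_sub, hPlin.map_smul]
    rw [hTw, hPlin.map_sub (T _) (T _), hPlin.map_sub (T x) (T _), hPlin.map_sub (x : E) y,
      hPfix y hy]
    linear_combination (norm := module) hxk + hPu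
  have hwnorm : ‖xk - y‖ ≤ ‖T x - T ⟨y, hK hy⟩‖ + ‖z‖ * ‖(x : E) - y‖ := by
    calc ‖xk - y‖ = ‖Rk (P (T ⟨xk - y, hK hw⟩) - z • (xk - y))‖ := by rw [hRkleft _ hw]
      _ ≤ ‖P (T x - T ⟨y, hK hy⟩) - z • P ((x : E) - y)‖ := by rw [hresidual]; exact hRknorm _
      _ ≤ ‖P (T x - T ⟨y, hK hy⟩)‖ + ‖z‖ * ‖P ((x : E) - y)‖ := by
        rw [← norm_smul]; exact norm_sub_le _ _
      _ ≤ ‖T x - T ⟨y, hK hy⟩‖ + ‖z‖ * ‖(x : E) - y‖ := by gcongr <;> exact hPnorm _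
  calc ‖xk - x‖ ≤ ‖xk - y‖ + ‖y - x‖ := norm_sub_le_norm_sub_add_norm_sub _ _ _
    _ ≤ _ := by rw [norm_sub_rev y]; linarith

end Galerkin

theorem galerkin_strong_resolvent_convergence_general
    {H : Type*} [NormedAddCommGroup H] [InnerProductSpace ℂ H]
    (T : H →ₗ.[ℂ] H)
    (Hn : ℕ → Submodule ℂ H)
    (hmono : Monotone Hn) (hsub : ∀ n, Hn n ≤ T.domain)
    -- the orthogonal projections `Pn` onto `Hn`
    (Pn : ℕ → H → H)
    (hPmem : ∀ n u, Pn n u ∈ Hn n)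
    (hPfix : ∀ n, ∀ u ∈ Hn n, Pn n u = u)
    (hPsym : ∀ n u v, ⟪Pn n u, v⟫_ℂ = ⟪u, Pn n v⟫_ℂ)
    -- `⋃ n, Hn n` is a core of `T`
    (hcore : ∀ x : T.domain, ∀ ε > (0 : ℝ), ∃ n, ∃ y, ∃ hy : y ∈ Hn n,
      ‖(x : H) - y‖ < ε ∧ ‖T x - T ⟨y, hsub n hy⟩‖ < ε)
    -- `R = (T - i)⁻¹`: the resolvent of `T` at `i`
    (R : H → H) (hRdom : ∀ u, R u ∈ T.domain)
    (hRinv : ∀ u, T ⟨R u, hRdom u⟩ - Complex.I • R u = u)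
    -- `Rn n = (Tn - i)⁻¹`: the resolvent of the compression `Tn = Pn T|_{Hn}` on `Hn n`
    (Rn : ℕ → H → H) (hRnmem : ∀ n u, Rn n u ∈ Hn n)
    (hRninv : ∀ n, ∀ u ∈ Hn n,
      Pn n (T ⟨Rn n u, hsub n (hRnmem n u)⟩) - Complex.I • Rn n u = u)
    (hRnleft : ∀ n, ∀ x, ∀ hx : x ∈ Hn n,
      Rn n (Pn n (T ⟨x, hsub n hx⟩) - Complex.I • x) = x)
    (hRnnorm : ∀ n u, ‖Rn n u‖ ≤ ‖u‖) :
    ∀ u : H, Tendsto (fun n => Rn n (Pn n u)) atTop (𝓝 (R u)) := by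
  intro u
  set x : T.domain := ⟨R u, hRdom u⟩
  have hu : T x - Complex.I • (x : H) = u := hRinv u
  rw [Metric.tendsto_atTop]
  intro ε hε
  obtain ⟨m, y, hy, hxy, hTxy⟩ := hcore x (ε / 3) (by positivity)
  refine ⟨m, fun n hn => ?_⟩
  have hest := norm_galerkin_resolvent_sub_le (hsub n) (hPsym n) (hPmem n) (hPfix n) (hRnmem n)
    (hRninv n) (hRnleft n) (hRnnorm n) x (hmono hn hy)
  rw [hu, Complex.norm_I] at hest
  rw [dist_eq_norm]
  linarith

/-- Let `T` be selfadjoint on a separable Hilbert space `H` and `(Hn)` an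
increasing sequence of finite-dimensional subspaces of `dom T` with `Pn → I` strongly such
that `⋃ n, Hn n` is a core of `T`.  Then the compressions `Tn = Pn T|_{Hn}` converge to `T`
in strong resolvent sense: `(Tn − i)⁻¹ Pn u → (T − i)⁻¹ u` for every `u ∈ H`.  Here `R`
denotes the resolvent `(T - i)⁻¹` and `Rn n` the resolvent `(Tn - i)⁻¹` on `Hn n`. -/
theorem galerkin_strong_resolvent_convergence
    {H : Type*} [NormedAddCommGroup H] [InnerProductSpace ℂ H] [CompleteSpace H]
    [TopologicalSpace.SeparableSpace H]
    (T : H →ₗ.[ℂ] H) (hT : IsSelfAdjoint T)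
    (Hn : ℕ → Submodule ℂ H) (hfin : ∀ n, FiniteDimensional ℂ (Hn n))
    (hmono : Monotone Hn) (hsub : ∀ n, Hn n ≤ T.domain)
    -- the orthogonal projections `Pn` onto `Hn`
    (Pn : ℕ → H → H)
    (hPmem : ∀ n u, Pn n u ∈ Hn n)
    (hPfix : ∀ n, ∀ u ∈ Hn n, Pn n u = u)
    (hPsym : ∀ n u v, ⟪Pn n u, v⟫_ℂ = ⟪u, Pn n v⟫_ℂ)
    (hPstrong : ∀ u : H, Tendsto (fun n => Pn n u) atTop (𝓝 u))
    -- `⋃ n, Hn n` is a core of `T`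
    (hcore : ∀ x : T.domain, ∀ ε > (0 : ℝ), ∃ n, ∃ y, ∃ hy : y ∈ Hn n,
      ‖(x : H) - y‖ < ε ∧ ‖T x - T ⟨y, hsub n hy⟩‖ < ε)
    -- `R = (T - i)⁻¹`: the resolvent of `T` at `i`
    (R : H → H) (hRdom : ∀ u, R u ∈ T.domain)
    (hRinv : ∀ u, T ⟨R u, hRdom u⟩ - Complex.I • R u = u)
    (hRleft : ∀ x : T.domain, R (T x - Complex.I • (x : H)) = (x : H))
    -- `Rn n = (Tn - i)⁻¹`: the resolvent of the compression `Tn = Pn T|_{Hn}` on `Hn n`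
    (Rn : ℕ → H → H) (hRnmem : ∀ n u, Rn n u ∈ Hn n)
    (hRninv : ∀ n, ∀ u ∈ Hn n,
      Pn n (T ⟨Rn n u, hsub n (hRnmem n u)⟩) - Complex.I • Rn n u = u)
    (hRnleft : ∀ n, ∀ x, ∀ hx : x ∈ Hn n,
      Rn n (Pn n (T ⟨x, hsub n hx⟩) - Complex.I • x) = x)
    (hRnnorm : ∀ n u, ‖Rn n u‖ ≤ ‖u‖) :
    ∀ u : H, Tendsto (fun n => Rn n (Pn n u)) atTop (𝓝 (R u)) :=
  galerkin_strong_resolvent_convergence_general T Hn hmono hsub Pn hPmem hPfix hPsym hcore R hRdom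
    hRinv Rn hRnmem hRninv hRnleft hRnnorm
end

section
/- Let (T_n) be a sequence of linear operators on a separable Hilbert space H, and for ε > 0 define the limiting ε-near spectrum Λ_{e,ε}((T_n)) as the set of λ ∈ ℂ for which there exist a subsequence (n_k) and unit vectors x_k ∈ dom(T_{n_k}) with x_k ⇀ 0 weakly and ‖(T_{n_k} − λ)x_k‖ → ε; define the limiting essential spectrum σ_e((T_n)) analogously with ‖(T_{n_k} − λ)x_k‖ → 0. Then ⋂_{ε>0} ⋃_{δ∈(0,ε]} Λ_{e,δ}((T_n)) ⊆ σ_e((T_n)). -/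
open scoped InnerProductSpace
open Filter Topology

variable {H : Type*} [NormedAddCommGroup H] [InnerProductSpace ℂ H] [CompleteSpace H]

/-- The limiting `δ`-near spectrum `Λ_{e,δ}((Tₙ))` of a sequence of (generally unbounded)
operators `Tₙ`: the set of `λ ∈ ℂ` for which there are a subsequence `(n_k)` and unit
vectors `x_k ∈ dom T_{n_k}` with `x_k ⇀ 0` weakly and `‖(T_{n_k} − λ) x_k‖ → δ`.
For `δ = 0` this is the limiting essential spectrum `σ_e((Tₙ))`. -/
def limitingNearSpectrum (T : ℕ → (H →ₗ.[ℂ] H)) (δ : ℝ) : Set ℂ :=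
  {lam : ℂ | ∃ n : ℕ → ℕ, StrictMono n ∧
    ∃ x : (k : ℕ) → (T (n k)).domain,
      (∀ k, ‖(x k : H)‖ = 1) ∧
      (∀ v : H, Tendsto (fun k => ⟪v, ((x k : H))⟫_ℂ) atTop (𝓝 0)) ∧
      Tendsto (fun k => ‖T (n k) (x k) - lam • ((x k : H))‖) atTop (𝓝 δ)}

/-- The limiting essential spectrum `σ_e((Tₙ))`. -/
def limitingEssentialSpectrum (T : ℕ → (H →ₗ.[ℂ] H)) : Set ℂ :=
  limitingNearSpectrum T 0

/-!
If `λ ∈ Λ_{e,δ}` for arbitrarily small `δ > 0`, then for every `ε > 0` and every finite set of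
test vectors there are arbitrarily late unit vectors `x ∈ dom Tₙ` with `‖(Tₙ − λ)x‖ < ε` and
`|⟪v, x⟫| < ε` on the test vectors. A diagonal choice with `ε = 1/(m+1)` and the first `m + 1`
terms of a dense sequence gives a singular sequence for `λ`: on the unit sphere, weak convergence
to `0` only has to be tested on a dense set, since the functionals `⟪v, ·⟫` are equicontinuous.
-/

theorem tendsto_inner_zero_of_dense {𝕜 E ι : Type*} [RCLike 𝕜] [NormedAddCommGroup E]
    [InnerProductSpace 𝕜 E] {l : Filter ι} {x : ι → E} {C : ℝ} (hx : ∀ i, ‖x i‖ ≤ C)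
    {S : Set E} (hS : Dense S) (h : ∀ v ∈ S, Tendsto (fun i => ⟪v, x i⟫_𝕜) l (𝓝 0)) (v : E) :
    Tendsto (fun i => ⟪v, x i⟫_𝕜) l (𝓝 0) := by
  have hbound : ∃ C, ∀ i w, ‖innerSLFlip 𝕜 (x i) w‖ ≤ C * ‖w‖ :=
    ⟨C, fun i w => (norm_inner_le_norm w (x i)).trans (by rw [mul_comm]; gcongr; exact hx i)⟩
  have hequi : Equicontinuous fun i (w : E) => ⟪w, x i⟫_𝕜 :=
    ((NormedSpace.equicontinuous_TFAE fun i => innerSLFlip 𝕜 (x i)).out 3 1).mp hbound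
  exact hS.induction (P := fun w => Tendsto (fun i => ⟪w, x i⟫_𝕜) l (𝓝 0)) h
    (hequi.isClosed_setOfPred_tendsto continuous_const) v

section

variable {E : Type*} [NormedAddCommGroup E] [InnerProductSpace ℂ E] {T : ℕ → (E →ₗ.[ℂ] E)}
  {lam : ℂ}

theorem frequently_exists_approx_of_mem_limitingNearSpectrum {δ ε : ℝ}
    (hlam : lam ∈ limitingNearSpectrum T δ) (hδε : δ < ε) (s : Finset E) :
    ∃ᶠ n in atTop, ∃ x : (T n).domain, ‖(x : E)‖ = 1 ∧ ‖T n x - lam • (x : E)‖ < ε ∧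
      ∀ v ∈ s, ‖⟪v, (x : E)⟫_ℂ‖ < ε := by
  obtain ⟨n, hn, x, hx, hweak, hres⟩ := hlam
  have hε : 0 < ε := (ge_of_tendsto' hres fun _ => norm_nonneg _).trans_lt hδε
  have hinner : ∀ᶠ k in atTop, ∀ v ∈ s, ‖⟪v, (x k : E)⟫_ℂ‖ < ε :=
    (eventually_all_finset s).2 fun v _ =>
      (tendsto_zero_iff_norm_tendsto_zero.1 (hweak v)).eventually_lt_const hε
  exact hn.tendsto_atTop.frequently_map n (fun k hk => ⟨x k, hx k, hk⟩)
    ((hres.eventually_lt_const hδε).and hinner).frequently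

theorem mem_limitingEssentialSpectrum_of_frequently_exists_approx
    [TopologicalSpace.SeparableSpace E]
    (happrox : ∀ ε > 0, ∀ s : Finset E, ∃ᶠ n in atTop, ∃ x : (T n).domain, ‖(x : E)‖ = 1 ∧
      ‖T n x - lam • (x : E)‖ < ε ∧ ∀ v ∈ s, ‖⟪v, (x : E)⟫_ℂ‖ < ε) :
    lam ∈ limitingEssentialSpectrum T := by
  classical
  have : Nonempty E := ⟨0⟩
  set u := TopologicalSpace.denseSeq E
  obtain ⟨N, hN, hx⟩ := extraction_forall_of_frequently fun m =>
    happrox (1 / ((m : ℝ) + 1)) Nat.one_div_pos_of_nat ((Finset.range (m + 1)).image u)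
  choose x hx hres hinner using hx
  have hto : Tendsto (fun m : ℕ => 1 / ((m : ℝ) + 1)) atTop (𝓝 0) :=
    tendsto_one_div_add_atTop_nhds_zero_nat
  refine ⟨N, hN, x, hx, ?_, squeeze_zero (fun _ => norm_nonneg _) (fun m => (hres m).le) hto⟩
  refine tendsto_inner_zero_of_dense (fun m => (hx m).le)
    (TopologicalSpace.denseRange_denseSeq E) ?_
  rintro _ ⟨j, rfl⟩
  refine squeeze_zero_norm' ?_ hto
  filter_upwards [eventually_ge_atTop j] with m hjm
  exact (hinner m (u j) (Finset.mem_image_of_mem u (Finset.mem_range_succ_iff.2 hjm))).le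

end

theorem inter_union_limitingNearSpectrum_subset_general
    [TopologicalSpace.SeparableSpace H]
    (T : ℕ → (H →ₗ.[ℂ] H)) :
    ⋂ ε ∈ Set.Ioi (0 : ℝ), ⋃ δ ∈ Set.Ioc (0 : ℝ) ε, limitingNearSpectrum T δ
      ⊆ limitingEssentialSpectrum T := by
  intro lam hlam
  refine mem_limitingEssentialSpectrum_of_frequently_exists_approx fun ε hε s => ?_
  obtain ⟨δ, hδ, hmem⟩ := Set.mem_iUnion₂.1 (Set.mem_iInter₂.1 hlam (ε / 2) (half_pos hε))
  exact frequently_exists_approx_of_mem_limitingNearSpectrum hmem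
    (hδ.2.trans_lt (half_lt_self hε)) s

/-- For a sequence `(Tₙ)` of densely defined operators on a separable
Hilbert space, `⋂_{ε>0} ⋃_{δ ∈ (0,ε]} Λ_{e,δ}((Tₙ)) ⊆ σ_e((Tₙ))`. -/
theorem inter_union_limitingNearSpectrum_subset
    [TopologicalSpace.SeparableSpace H]
    (T : ℕ → (H →ₗ.[ℂ] H)) (hdense : ∀ n, Dense ((T n).domain : Set H)) :
    ⋂ ε ∈ Set.Ioi (0 : ℝ), ⋃ δ ∈ Set.Ioc (0 : ℝ) ε, limitingNearSpectrum T δ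
      ⊆ limitingEssentialSpectrum T :=
  inter_union_limitingNearSpectrum_subset_general T
end
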